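/- arXiv:1805.12052 — 2 statements merged into one kernel-verified Lean document; each statement's English description precedes it below -/
import Mathlib

section
/- For the model y(t;ω) = Σ_k c_k e^{ikωt} (finite Fourier sum with nonzero amplitude c_k for some k ≠ 0), the diagonal Hessian entry H(T) = (1/T) ∫₀ᵀ |∂y/∂ω|² dt grows like T², i.e. there exist constants 0 < a ≤ b with a T² ≤ H(T) ≤ b T² for all sufficiently large T. -/
/-!
Write `∂y/∂ω = t · Σ_k w_k e^{ikωt}` with `w_k = i k c_k` and expand the square into a double sum.
The diagonal terms contribute `(Σ_k |w_k|²) ∫₀ᵀ t² dt = S T³/3` with `S > 0`; each off-diagonal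
term is an oscillatory integral `∫₀ᵀ t² e^{i(k-l)ωt} dt`, which one integration by parts bounds by
`3T²/|(k-l)ω| ≤ 3T²/|ω|`. So `T · H(T) = S T³/3 + O(T²)`, and `H(T)` is squeezed between
`S T²/6` and `S T²/2` for large `T`.
-/

open MeasureTheory Finset Complex
open scoped ComplexConjugate

section

variable {ι : Type*} (s : Finset ι) (w : ι → ℂ)

lemma abs_re_sum_sum_mul_conj_sub_le (M : ι → ι → ℂ) {m B : ℝ} (hdiag : ∀ k ∈ s, M k k = m)
    (hoff : ∀ k ∈ s, ∀ l ∈ s, k ≠ l → ‖M k l‖ ≤ B) (hB : 0 ≤ B) :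
    |(∑ k ∈ s, ∑ l ∈ s, w k * conj (w l) * M k l).re - m * ∑ k ∈ s, ‖w k‖ ^ 2|
      ≤ B * (∑ k ∈ s, ‖w k‖) ^ 2 := by
  classical
  set M₀ : ι → ι → ℂ := fun k l => M k l - if k = l then (m : ℂ) else 0
  have hM₀ : ∀ k ∈ s, ∀ l ∈ s, ‖M₀ k l‖ ≤ B := fun k hk l hl => by
    by_cases hkl : k = l
    · subst hkl; simp [M₀, hdiag k hk, hB]
    · simpa [M₀, hkl] using hoff k hk l hl hkl
  have hsplit : ∑ k ∈ s, ∑ l ∈ s, w k * conj (w l) * M k l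
      = ((m * ∑ k ∈ s, ‖w k‖ ^ 2 : ℝ) : ℂ) + ∑ k ∈ s, ∑ l ∈ s, w k * conj (w l) * M₀ k l := by
    simp only [M₀, mul_sub, sum_sub_distrib, mul_ite, mul_zero, sum_ite_eq, sum_ite_mem,
      inter_self, mul_conj, normSq_eq_norm_sq, ofReal_mul, ofReal_sum, ofReal_pow, mul_sum,
      mul_comm _ (m : ℂ)]
    ring
  rw [hsplit, add_re, ofReal_re, add_sub_cancel_left]
  calc _ ≤ ‖∑ k ∈ s, ∑ l ∈ s, w k * conj (w l) * M₀ k l‖ := abs_re_le_norm _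
    _ ≤ ∑ k ∈ s, ∑ l ∈ s, ‖w k‖ * ‖w l‖ * B := by
        refine (norm_sum_le _ _).trans (sum_le_sum fun k hk => (norm_sum_le _ _).trans
          (sum_le_sum fun l hl => ?_))
        rw [norm_mul, norm_mul, RCLike.norm_conj]
        exact mul_le_mul_of_nonneg_left (hM₀ k hk l hl) (by positivity)
    _ = B * (∑ k ∈ s, ‖w k‖) ^ 2 := by
        rw [sq, sum_mul_sum, mul_sum]
        simp only [mul_sum]
        exact sum_congr rfl fun _ _ => sum_congr rfl fun _ _ => by ring

lemma norm_integral_sq_mul_exp_le {r : ℝ} (hr : r ≠ 0) {T : ℝ} (hT : 0 ≤ T) :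
    ‖∫ t in (0:ℝ)..T, (t:ℂ) ^ 2 * exp (I * r * t)‖ ≤ 3 * T ^ 2 / |r| := by
  have hIr : I * r ≠ 0 := mul_ne_zero I_ne_zero (ofReal_ne_zero.2 hr)
  have hnorm_Ir : ‖I * (r:ℂ)‖ = |r| := by simp
  have hnorm_exp : ∀ t : ℝ, ‖exp (I * r * t)‖ = 1 := fun t => by
    rw [norm_exp]; simp
  have hv : ∀ t : ℝ, HasDerivAt (fun t : ℝ => exp (I * r * t) / (I * r)) (exp (I * r * t)) t :=
    fun t => by
      have := (((hasDerivAt_id (t:ℂ)).const_mul (I * r)).cexp.div_const (I * r)).comp_ofReal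
      simpa [hIr] using this
  have hu : ∀ t : ℝ, HasDerivAt (fun t : ℝ => (t:ℂ) ^ 2) (2 * t) t := fun t => by
    simpa using (hasDerivAt_pow 2 (t:ℂ)).comp_ofReal
  rw [intervalIntegral.integral_mul_deriv_eq_deriv_mul (fun t _ => hu t) (fun t _ => hv t)
    (by apply Continuous.intervalIntegrable; fun_prop)
    (by apply Continuous.intervalIntegrable; fun_prop)]
  have hrest : ‖∫ t in (0:ℝ)..T, 2 * (t:ℂ) * (exp (I * r * t) / (I * r))‖ ≤ 2 * T / |r| * T := by
    have := intervalIntegral.norm_integral_le_of_norm_le_const (a := 0) (b := T)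
      (f := fun t : ℝ => 2 * (t:ℂ) * (exp (I * r * t) / (I * r))) (C := 2 * T / |r|) ?_
    · simpa [abs_of_nonneg hT] using this
    intro t ht
    rw [Set.uIoc_of_le hT] at ht
    rw [norm_mul, norm_div, hnorm_exp, hnorm_Ir, norm_mul, norm_real, Real.norm_of_nonneg ht.1.le]
    have h2 : ‖(2:ℂ)‖ = 2 := by norm_num
    rw [h2, mul_one_div]
    gcongr
    exact ht.2
  have hfirst : ‖(T:ℂ) ^ 2 * (exp (I * r * T) / (I * r))‖ = T ^ 2 / |r| := by
    rw [norm_mul, norm_div, hnorm_exp, hnorm_Ir, norm_pow, norm_real, Real.norm_of_nonneg hT]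
    ring
  calc _ ≤ ‖(T:ℂ) ^ 2 * (exp (I * r * T) / (I * r))‖
        + ‖∫ t in (0:ℝ)..T, 2 * (t:ℂ) * (exp (I * r * t) / (I * r))‖ := by
        have := norm_sub_le ((T:ℂ) ^ 2 * (exp (I * r * T) / (I * r)))
          (∫ t in (0:ℝ)..T, 2 * (t:ℂ) * (exp (I * r * t) / (I * r)))
        simpa using this
    _ ≤ T ^ 2 / |r| + 2 * T / |r| * T := by rw [hfirst]; gcongr
    _ = 3 * T ^ 2 / |r| := by ring

lemma sq_norm_sum_mul_exp (ν : ι → ℝ) (t : ℝ) :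
    ‖∑ k ∈ s, w k * exp (I * ν k * t)‖ ^ 2
      = (∑ k ∈ s, ∑ l ∈ s, w k * conj (w l) * exp (I * ↑(ν k - ν l) * t)).re := by
  rw [← ofReal_re (_ ^ 2), ofReal_pow, ← mul_conj', map_sum, sum_mul_sum]
  congr 1
  refine sum_congr rfl fun k _ => sum_congr rfl fun l _ => ?_
  rw [map_mul, ← exp_conj, ofReal_sub, mul_sub, sub_mul, exp_sub]
  simp only [map_mul, conj_I, conj_ofReal]
  rw [neg_mul, neg_mul, exp_neg]
  ring

lemma integral_sq_mul_sq_norm_sum_mul_exp (ν : ι → ℝ) (T : ℝ) :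
    ∫ t in (0:ℝ)..T, t ^ 2 * ‖∑ k ∈ s, w k * exp (I * ν k * t)‖ ^ 2
      = (∑ k ∈ s, ∑ l ∈ s, w k * conj (w l) *
          ∫ t in (0:ℝ)..T, (t:ℂ) ^ 2 * exp (I * ↑(ν k - ν l) * t)).re := by
  have hpointwise : ∀ t : ℝ, t ^ 2 * ‖∑ k ∈ s, w k * exp (I * ν k * t)‖ ^ 2
      = RCLike.re (∑ k ∈ s, ∑ l ∈ s,
          w k * conj (w l) * ((t:ℂ) ^ 2 * exp (I * ↑(ν k - ν l) * t))) := fun t => by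
    rw [sq_norm_sum_mul_exp, ← re_ofReal_mul, mul_sum]
    simp only [mul_sum, ofReal_pow]
    congr 1
    exact sum_congr rfl fun _ _ => sum_congr rfl fun _ _ => by ring
  simp_rw [hpointwise]
  rw [intervalIntegral.intervalIntegral_re (Continuous.intervalIntegrable (by fun_prop) _ _),
    intervalIntegral.integral_finsetSum fun k _ => Continuous.intervalIntegrable (by fun_prop) _ _]
  refine congrArg Complex.re (sum_congr rfl fun k _ => ?_)
  rw [intervalIntegral.integral_finsetSum]
  · simp only [intervalIntegral.integral_const_mul]
  · exact fun l _ => Continuous.intervalIntegrable (by fun_prop) _ _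

theorem abs_integral_sq_mul_sq_norm_sum_mul_exp_sub_le (ν : ι → ℝ) {δ : ℝ} (hδ : 0 < δ)
    (hsep : ∀ k ∈ s, ∀ l ∈ s, k ≠ l → δ ≤ |ν k - ν l|) {T : ℝ} (hT : 0 ≤ T) :
    |(∫ t in (0:ℝ)..T, t ^ 2 * ‖∑ k ∈ s, w k * exp (I * ν k * t)‖ ^ 2)
        - T ^ 3 / 3 * ∑ k ∈ s, ‖w k‖ ^ 2|
      ≤ 3 * (∑ k ∈ s, ‖w k‖) ^ 2 / δ * T ^ 2 := by
  rw [integral_sq_mul_sq_norm_sum_mul_exp]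
  refine (abs_re_sum_sum_mul_conj_sub_le s w _ (B := 3 * T ^ 2 / δ) (fun k _ => ?_)
    (fun k hk l hl hkl => ?_) (by positivity)).trans_eq (by ring)
  · simp only [sub_self, ofReal_zero, mul_zero, zero_mul, exp_zero, mul_one, ← ofReal_pow,
      intervalIntegral.integral_ofReal, integral_pow]
    norm_num
  · have hδr := hsep k hk l hl hkl
    refine (norm_integral_sq_mul_exp_le ?_ hT).trans ?_
    · exact abs_pos.1 (hδ.trans_le hδr)
    · gcongr

end

lemma quadratic_growth_of_abs_sub_cube_le {f : ℝ → ℝ} {S K : ℝ} (hS : 0 < S)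
    (hf : ∀ T, 0 < T → |f T - T ^ 3 / 3 * S| ≤ K * T ^ 2) :
    ∃ a b : ℝ, 0 < a ∧ a ≤ b ∧ ∃ T₀ : ℝ, 0 < T₀ ∧ ∀ T : ℝ, T₀ ≤ T →
      a * T ^ 2 ≤ 1 / T * f T ∧ 1 / T * f T ≤ b * T ^ 2 := by
  refine ⟨S / 6, S / 2, by positivity, by linarith, max 1 (6 * K / S), by positivity,
    fun T hT => ?_⟩
  have hT0 : 0 < T := (lt_max_of_lt_left one_pos).trans_le hT
  have hKT : K * T ^ 2 ≤ S / 6 * T ^ 3 := by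
    have := (div_le_iff₀ hS).1 ((le_max_right _ _).trans hT)
    nlinarith [sq_nonneg T]
  obtain ⟨hlo, hhi⟩ := abs_le.1 (hf T hT0)
  have hscale : ∀ a : ℝ, a * T ^ 2 = 1 / T * (a * T ^ 3) := fun a => by field_simp
  constructor
  · rw [hscale]; gcongr; linarith
  · rw [hscale]; gcongr; linarith

theorem stmt_5_general (N : ℕ) (c : ℤ → ℂ) (ω : ℝ) (hω : ω ≠ 0)
    (hnz : ∃ k : ℤ, k ∈ Finset.Icc (-(N:ℤ)) N ∧ k ≠ 0 ∧ c k ≠ 0) :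
    ∃ a b : ℝ, 0 < a ∧ a ≤ b ∧ ∃ T₀ : ℝ, 0 < T₀ ∧ ∀ T : ℝ, T₀ ≤ T →
      a * T ^ 2 ≤
        (1 / T) * ∫ t in (0:ℝ)..T,
          ‖∑ k ∈ Finset.Icc (-(N:ℤ)) N,
            Complex.I * (k : ℂ) * (t : ℂ) * c k *
              Complex.exp (Complex.I * (k : ℂ) * (ω : ℂ) * (t : ℂ))‖ ^ 2 ∧
      (1 / T) * ∫ t in (0:ℝ)..T,
          ‖∑ k ∈ Finset.Icc (-(N:ℤ)) N,
            Complex.I * (k : ℂ) * (t : ℂ) * c k *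
              Complex.exp (Complex.I * (k : ℂ) * (ω : ℂ) * (t : ℂ))‖ ^ 2
        ≤ b * T ^ 2 := by
  set w : ℤ → ℂ := fun k => I * k * c k
  have hfactor : ∀ t : ℝ, ‖∑ k ∈ Icc (-(N:ℤ)) N, I * k * t * c k * exp (I * k * ω * t)‖ ^ 2
      = t ^ 2 * ‖∑ k ∈ Icc (-(N:ℤ)) N, w k * exp (I * ↑((k : ℝ) * ω) * t)‖ ^ 2 := fun t => by
    have hsum : ∑ k ∈ Icc (-(N:ℤ)) N, I * k * t * c k * exp (I * k * ω * t)
        = t * ∑ k ∈ Icc (-(N:ℤ)) N, w k * exp (I * ↑((k : ℝ) * ω) * t) := by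
      rw [mul_sum]
      refine sum_congr rfl fun k _ => ?_
      simp only [w, ofReal_mul, ofReal_intCast, ← mul_assoc]
      ring
    rw [hsum, norm_mul, mul_pow, norm_real, Real.norm_eq_abs, sq_abs]
  have hsep : ∀ k ∈ Icc (-(N:ℤ)) N, ∀ l ∈ Icc (-(N:ℤ)) N, k ≠ l →
      |ω| ≤ |(k : ℝ) * ω - l * ω| := fun k _ l _ hkl => by
    rw [← sub_mul, abs_mul]
    refine le_mul_of_one_le_left (abs_nonneg ω) ?_
    exact_mod_cast Int.one_le_abs (sub_ne_zero.2 hkl)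
  have hS : 0 < ∑ k ∈ Icc (-(N:ℤ)) N, ‖w k‖ ^ 2 := by
    obtain ⟨k₀, hk₀, hk₀_ne, hck₀⟩ := hnz
    refine lt_of_lt_of_le ?_ (single_le_sum (fun k _ => sq_nonneg ‖w k‖) hk₀)
    have : w k₀ ≠ 0 := mul_ne_zero (mul_ne_zero I_ne_zero (Int.cast_ne_zero.2 hk₀_ne)) hck₀
    positivity
  refine quadratic_growth_of_abs_sub_cube_le (K := 3 * (∑ k ∈ Icc (-(N:ℤ)) N, ‖w k‖) ^ 2 / |ω|)
    hS fun T hT => ?_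
  simp_rw [hfactor]
  exact abs_integral_sq_mul_sq_norm_sum_mul_exp_sub_le _ w _ (abs_pos.2 hω) hsep hT.le

/-- For the finite Fourier model `y(t;ω) = Σ_k c_k e^{ikωt}` (real signal:
`c_{−k} = conj c_k`, with some `c_k ≠ 0` for `k ≠ 0`, and `ω ≠ 0`), the frequency
sensitivity is `∂y/∂ω = Σ_k ikt c_k e^{ikωt}`, and the diagonal Hessian entry
`H(T) = (1/T) ∫₀ᵀ |∂y/∂ω|² dt` grows like `T²`:
`a T² ≤ H(T) ≤ b T²` for sufficiently large `T`. -/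
theorem stmt_5 (N : ℕ) (c : ℤ → ℂ) (ω : ℝ) (hω : ω ≠ 0)
    (hreal : ∀ k : ℤ, c (-k) = starRingEnd ℂ (c k))
    (hnz : ∃ k : ℤ, k ∈ Finset.Icc (-(N:ℤ)) N ∧ k ≠ 0 ∧ c k ≠ 0) :
    ∃ a b : ℝ, 0 < a ∧ a ≤ b ∧ ∃ T₀ : ℝ, 0 < T₀ ∧ ∀ T : ℝ, T₀ ≤ T →
      a * T ^ 2 ≤
        (1 / T) * ∫ t in (0:ℝ)..T,
          ‖∑ k ∈ Finset.Icc (-(N:ℤ)) N,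
            Complex.I * (k : ℂ) * (t : ℂ) * c k *
              Complex.exp (Complex.I * (k : ℂ) * (ω : ℂ) * (t : ℂ))‖ ^ 2 ∧
      (1 / T) * ∫ t in (0:ℝ)..T,
          ‖∑ k ∈ Finset.Icc (-(N:ℤ)) N,
            Complex.I * (k : ℂ) * (t : ℂ) * c k *
              Complex.exp (Complex.I * (k : ℂ) * (ω : ℂ) * (t : ℂ))‖ ^ 2
        ≤ b * T ^ 2 :=
  stmt_5_general N c ω hω hnz
end

section
/- For the two-parameter model y(t; A, ω) = A cos(ωt) with decomposition ỹ(φ; A) = A cos(φ) and φ(t; ω) = ωt, the quadratic phase-space cost C^φ(A, ω) = (1/2T)∫₀ᵀ [ (A₀cos(ω₀t) − A cos(ω₀t)) + (−A₀ sin(ω₀t))(ω₀t − ωt) ]² dt is a polynomial of degree 2 in (A, ω) whose Hessian is positive definite for T > 0 (whenever A₀ ≠ 0), hence C^φ has a unique global minimum at (A₀, ω₀) and no other critical points. -/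
/-!
Write `p₀ = (A₀, ω₀)` and let `L t` be the derivative of `(A, ω) ↦ A cos(ωt)` at `p₀`, i.e.
`L t v = v₁ cos(ω₀t) - v₂ A₀ t sin(ω₀t)`. The integrand of `C^φ(p)` is `(L t (p - p₀))²`, so
`C^φ(p) = B (p - p₀) (p - p₀)` for the Gram form `B v w = (1/2T) ∫₀ᵀ L t v · L t w`.
Since `A₀ ≠ 0` and `ω₀ ≠ 0`, the functions `cos(ω₀t)` and `A₀ t sin(ω₀t)` are linearly
independent on `[0, T]`, so `B` is positive definite. Then `p ↦ B (p - p₀) (p - p₀)` has Hessian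
`2B`, vanishes only at `p₀`, and its derivative at `p`, evaluated at `p - p₀`, is
`2 B (p - p₀) (p - p₀)`, so `p₀` is its only critical point.
-/

open MeasureTheory Set

lemma intervalIntegral_pos_of_continuous_of_nonneg {f : ℝ → ℝ} (hf : Continuous f) (hnn : 0 ≤ f)
    {a b t : ℝ} (hab : a < b) (ht : t ∈ Icc a b) (hft : f t ≠ 0) : 0 < ∫ x in a..b, f x := by
  have hopen : IsOpen (Function.support f) := isOpen_ne_fun hf continuous_const
  rw [← closure_Ioo hab.ne] at ht
  have hmeet : (Function.support f ∩ Ioo a b).Nonempty := mem_closure_iff.1 ht _ hopen hft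
  rw [intervalIntegral.integral_pos_iff_support_of_nonneg_ae (ae_of_all _ hnn)
    (hf.intervalIntegrable a b)]
  exact ⟨hab, ((hopen.inter isOpen_Ioo).measure_pos volume hmeet).trans_le
    (measure_mono (inter_subset_inter_right _ Ioo_subset_Ioc_self))⟩

lemma Real.exists_mem_Ioc_sin_mul_ne_zero {ω T : ℝ} (hω : ω ≠ 0) (hT : 0 < T) :
    ∃ t ∈ Ioc 0 T, Real.sin (ω * t) ≠ 0 := by
  set t := min T |ω|⁻¹
  have ht : 0 < t := lt_min hT (by positivity)
  have hωt : |ω * t| ≤ 1 := by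
    rw [abs_mul, abs_of_pos ht]
    calc |ω| * t ≤ |ω| * |ω|⁻¹ := by gcongr; exact min_le_right _ _
      _ = 1 := mul_inv_cancel₀ (abs_ne_zero.2 hω)
  refine ⟨t, ⟨ht, min_le_left _ _⟩, fun h => ?_⟩
  obtain ⟨hlo, hhi⟩ :=
    abs_lt.1 (hωt.trans_lt (by linarith [Real.pi_gt_three] : (1 : ℝ) < Real.pi))
  rw [Real.sin_eq_zero_iff_of_lt_of_lt hlo hhi] at h
  exact mul_ne_zero hω ht.ne' h

namespace ContinuousLinearMap

variable {E : Type*} [NormedAddCommGroup E] [NormedSpace ℝ E]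

noncomputable def gram (L : ℝ → StrongDual ℝ E) (a b : ℝ) : E →L[ℝ] E →L[ℝ] ℝ :=
  ∫ t in a..b, (L t).smulRight (L t)

lemma gram_apply {L : ℝ → StrongDual ℝ E} (hL : Continuous L) (a b : ℝ) (v w : E) :
    gram L a b v w = ∫ t in a..b, L t v * L t w := by
  have hrankOne : Continuous fun t => (L t).smulRight (L t) :=
    (smulRightL ℝ E (StrongDual ℝ E)).continuous₂.comp (hL.prodMk hL)
  rw [gram, intervalIntegral_apply (hrankOne.intervalIntegrable a b),
    intervalIntegral_apply ((hrankOne.clm_apply continuous_const).intervalIntegrable a b)]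
  simp only [smulRight_apply, smul_apply, smul_eq_mul]

lemma gram_self_pos {L : ℝ → StrongDual ℝ E} (hL : Continuous L) {a b t : ℝ} (hab : a < b)
    (ht : t ∈ Icc a b) {v : E} (hv : L t v ≠ 0) : 0 < gram L a b v v := by
  rw [gram_apply hL]
  have hLv : Continuous fun t => L t v := hL.clm_apply continuous_const
  exact intervalIntegral_pos_of_continuous_of_nonneg (hLv.mul hLv) (fun t => mul_self_nonneg _)
    hab ht (mul_self_ne_zero.2 hv)

section Quadratic

variable (B : E →L[ℝ] E →L[ℝ] ℝ) (p₀ : E)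

lemma hasFDerivAt_apply_sub_sub (p : E) :
    HasFDerivAt (fun p => B (p - p₀) (p - p₀)) ((B + B.flip) (p - p₀)) p := by
  have hsub : HasFDerivAt (fun p => p - p₀) (ContinuousLinearMap.id ℝ E) p :=
    (hasFDerivAt_id p).sub_const p₀
  refine (B.hasFDerivAt_of_bilinear hsub hsub).congr_fderiv ?_
  ext w
  simp

lemma fderiv_apply_sub_sub :
    fderiv ℝ (fun p => B (p - p₀) (p - p₀)) = fun p => (B + B.flip) (p - p₀) :=
  funext fun p => (hasFDerivAt_apply_sub_sub B p₀ p).fderiv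

lemma iteratedFDeriv_two_apply_sub_sub (x v w : E) :
    iteratedFDeriv ℝ 2 (fun p => B (p - p₀) (p - p₀)) x ![v, w] = B v w + B w v := by
  have hlin : HasFDerivAt (fun p => (B + B.flip) (p - p₀)) (B + B.flip) x :=
    (B + B.flip).hasFDerivAt.comp x ((hasFDerivAt_id x).sub_const p₀)
  rw [iteratedFDeriv_two_apply, fderiv_apply_sub_sub, hlin.fderiv]
  simp

variable {B p₀}

lemma eq_of_fderiv_apply_sub_sub_eq_zero (hB : ∀ v ≠ 0, 0 < B v v) {p : E}
    (hp : fderiv ℝ (fun p => B (p - p₀) (p - p₀)) p = 0) : p = p₀ := by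
  by_contra hne
  have hcrit := congr($hp (p - p₀))
  rw [fderiv_apply_sub_sub] at hcrit
  simp only [add_apply, flip_apply, zero_apply] at hcrit
  linarith [hB _ (sub_ne_zero.2 hne)]

end Quadratic

end ContinuousLinearMap

open ContinuousLinearMap

/-- The derivative of `(A, ω) ↦ A cos(ωt)` at `(A₀, ω₀)`. -/
noncomputable def cosModelFDeriv (A₀ ω₀ t : ℝ) : StrongDual ℝ (ℝ × ℝ) :=
  Real.cos (ω₀ * t) • fst ℝ ℝ ℝ - (A₀ * t * Real.sin (ω₀ * t)) • snd ℝ ℝ ℝ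

lemma cosModelFDeriv_apply (A₀ ω₀ t : ℝ) (v : ℝ × ℝ) :
    cosModelFDeriv A₀ ω₀ t v = v.1 * Real.cos (ω₀ * t) - v.2 * (A₀ * t * Real.sin (ω₀ * t)) := by
  simp [cosModelFDeriv, mul_comm]

lemma continuous_cosModelFDeriv (A₀ ω₀ : ℝ) : Continuous (cosModelFDeriv A₀ ω₀) := by
  unfold cosModelFDeriv
  fun_prop

lemma exists_mem_Icc_cosModelFDeriv_ne_zero {A₀ ω₀ T : ℝ} (hA₀ : A₀ ≠ 0) (hω₀ : ω₀ ≠ 0)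
    (hT : 0 < T) {v : ℝ × ℝ} (hv : v ≠ 0) : ∃ t ∈ Icc 0 T, cosModelFDeriv A₀ ω₀ t v ≠ 0 := by
  simp_rw [cosModelFDeriv_apply]
  by_cases hv₁ : v.1 = 0
  · have hv₂ : v.2 ≠ 0 := fun h => hv (Prod.ext hv₁ h)
    obtain ⟨t, ht, hsin⟩ := Real.exists_mem_Ioc_sin_mul_ne_zero hω₀ hT
    refine ⟨t, Ioc_subset_Icc_self ht, ?_⟩
    rw [hv₁, zero_mul, zero_sub, neg_ne_zero]
    exact mul_ne_zero hv₂ (mul_ne_zero (mul_ne_zero hA₀ ht.1.ne') hsin)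
  · exact ⟨0, left_mem_Icc.2 hT.le, by simpa using hv₁⟩

/-- For `y(t;A,ω) = A cos(ωt)` with `ỹ(φ;A) = A cos φ`, `φ(t;ω) = ωt`, the
phase-space cost
`C^φ(A,ω) = (1/2T)∫₀ᵀ [(A₀cos(ω₀t) − A cos(ω₀t)) + (−A₀ sin(ω₀t))(ω₀t − ωt)]² dt`
is quadratic in `(A,ω)` with positive definite (constant) Hessian, so it has a
unique global minimum at `(A₀,ω₀)` and no other critical points. -/
theorem stmt_18 (A₀ ω₀ T : ℝ) (hA₀ : A₀ ≠ 0) (hω₀ : ω₀ ≠ 0) (hT : 0 < T)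
    (Cφ : ℝ × ℝ → ℝ)
    (hCφ : ∀ A ω : ℝ, Cφ (A, ω) = (1 / (2 * T)) * ∫ t in (0:ℝ)..T,
      ((A₀ * Real.cos (ω₀ * t) - A * Real.cos (ω₀ * t))
        + (-(A₀ * Real.sin (ω₀ * t))) * (ω₀ * t - ω * t)) ^ 2) :
    (∀ v : ℝ × ℝ, v ≠ 0 → 0 < iteratedFDeriv ℝ 2 Cφ (A₀, ω₀) ![v, v]) ∧
    (∀ p : ℝ × ℝ, Cφ (A₀, ω₀) ≤ Cφ p ∧ (Cφ p = Cφ (A₀, ω₀) → p = (A₀, ω₀))) ∧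
    (∀ p : ℝ × ℝ, fderiv ℝ Cφ p = 0 → p = (A₀, ω₀)) := by
  set B := (1 / (2 * T)) • gram (cosModelFDeriv A₀ ω₀) 0 T
  have hB : ∀ v ≠ 0, 0 < B v v := fun v hv => by
    obtain ⟨t, ht, hLt⟩ := exists_mem_Icc_cosModelFDeriv_ne_zero hA₀ hω₀ hT hv
    exact mul_pos (by positivity) (gram_self_pos (continuous_cosModelFDeriv A₀ ω₀) hT ht hLt)
  have hCφB : Cφ = fun p => B (p - (A₀, ω₀)) (p - (A₀, ω₀)) := funext fun ⟨A, ω⟩ => by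
    rw [hCφ, smul_apply, smul_apply, gram_apply (continuous_cosModelFDeriv A₀ ω₀), smul_eq_mul]
    congr 1
    refine intervalIntegral.integral_congr fun t _ => ?_
    simp only [cosModelFDeriv_apply, Prod.fst_sub, Prod.snd_sub]
    ring
  subst hCφB
  refine ⟨fun v hv => ?_, fun p => ?_, fun p => eq_of_fderiv_apply_sub_sub_eq_zero hB⟩
  · rw [iteratedFDeriv_two_apply_sub_sub]
    linarith [hB v hv]
  · rcases eq_or_ne p (A₀, ω₀) with rfl | hp
    · simp
    · have hpos := hB _ (sub_ne_zero.2 hp)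
      simp only [sub_self, map_zero]
      exact ⟨hpos.le, fun h => absurd h hpos.ne'⟩
end
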